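/- arXiv:2408.01367 — 2 statements merged into one kernel-verified Lean document; each statement's English description precedes it below -/
import Mathlib

section
/- Let Ω ⊂ ℝ^d be compact, Ω̃ = Ω × [0,1], C > 0, σ ∈ (0,1), and let Γ_θ be a masked multi-head self-attention in-context map. Then (b) for every (μ, x, t) ∈ Lip_C^σ(Ω̃) × Ω̃, Γ_θ(μ, x, t) = Γ̄_θ(μ_t, x), where Γ̄_θ(ν, x) = Γ_θ(ν, x, e(ν̄)) is the reduced map and e(ν̄) = max supp(ν̄); and (c) the reduced map (ν, x) ↦ Γ̄_θ(ν, x) is continuous on X_C^σ = {(μ_t, x) : μ ∈ Lip_C^σ(Ω̃), x ∈ Ω, t ∈ [0,1]} for the product of the weak* topology and the Euclidean topology; moreover Γ̄_θ(μ_t, x) equals the unmasked attention formula evaluated at μ_t: x + Σ_h W^h ∫ [exp(⟨Q^h x, K^h y⟩/√k) / ∫ exp(⟨Q^h x, K^h z⟩/√k) dμ_t(z, s)] V^h y dμ_t(y, r). -/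
open MeasureTheory Set Filter
open scoped ENNReal RealInnerProductSpace BigOperators Topology

noncomputable section

/-- Euclidean space `ℝ^n`. -/
abbrev E (n : ℕ) : Type := EuclideanSpace ℝ (Fin n)

/-- Build a vector of `ℝ^n` from its coordinates. -/
def toE {n : ℕ} (f : Fin n → ℝ) : E n := (EuclideanSpace.equiv (Fin n) ℝ).symm f

/-- Parameters `θ = (Wʰ, Qʰ, Kʰ, Vʰ)ₕ` of a multi-head attention layer with token
dimension `m`, head dimension `dh`, key/query dimension `k` and `H` heads.
(Matrices are represented as linear maps.) -/
structure AttentionParams (m dh k H : ℕ) where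
  W : Fin H → (E dh →L[ℝ] E m)
  Q : Fin H → (E m →L[ℝ] E k)
  K : Fin H → (E m →L[ℝ] E k)
  V : Fin H → (E m →L[ℝ] E dh)

/-- The (unmasked) multi-head self-attention in-context map `Γ_θ(μ, x)`. -/
def attention {m dh k H : ℕ} (θ : AttentionParams m dh k H)
    (μ : Measure (E m)) (x : E m) : E m :=
  x + ∑ h : Fin H, θ.W h (∫ y,
      (Real.exp (⟪θ.Q h x, θ.K h y⟫ / Real.sqrt k) /
        ∫ z, Real.exp (⟪θ.Q h x, θ.K h z⟫ / Real.sqrt k) ∂μ) • θ.V h y ∂μ)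

/-- In-context maps `(μ, x) ↦ G(μ, x)`. -/
abbrev ICMap (m m' : ℕ) : Type := Measure (E m) → E m → E m'

/-- In-context composition `(G₂ ⋄ G₁)(μ, x) = G₂(G₁(μ, ·)♯μ, G₁(μ, x))`. -/
def ictxComp {m m' m'' : ℕ} (G₂ : ICMap m' m'') (G₁ : ICMap m m') : ICMap m m'' :=
  fun μ x => G₂ (μ.map (G₁ μ)) (G₁ μ x)

/-- A context-free (tokenwise) layer, viewed as an in-context map. -/
def ctxFree {m m' : ℕ} (F : E m → E m') : ICMap m m' := fun _ x => F x

/-- `IsAttnChain dmax Hmax G` holds iff `G = F_{ξ_L} ⋄ Γ_{θ_L} ⋄ ⋯ ⋄ F_{ξ_1} ⋄ Γ_{θ_1}`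
for some `L ≥ 1`, where each `Γ_{θ_ℓ}` is a multi-head self-attention with token
dimension `≤ dmax`, head and key dimensions `1`, and at most `Hmax` heads, and each
`F_{ξ_ℓ}` is a context-free tokenwise layer. -/
inductive IsAttnChain (dmax Hmax : ℕ) : {m m' : ℕ} → ICMap m m' → Prop
  | base {m m' H : ℕ} (hm : m ≤ dmax) (hH : H ≤ Hmax)
      (θ : AttentionParams m 1 1 H) (F : E m → E m') :
      IsAttnChain dmax Hmax (ictxComp (ctxFree F) (attention θ))
  | step {m m' m'' H : ℕ} {T : ICMap m m'} (hT : IsAttnChain dmax Hmax T)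
      (hm : m' ≤ dmax) (hH : H ≤ Hmax)
      (θ : AttentionParams m' 1 1 H) (F : E m' → E m'') :
      IsAttnChain dmax Hmax (ictxComp (ctxFree F) (ictxComp (attention θ) T))

/-- The elementary in-context map `γ_λ`, `λ = (a, b, c, v)`. -/
def elemGamma {d : ℕ} (a : E d) (b c v : ℝ) (μ : Measure (E d)) (x : E d) : ℝ :=
  ⟪x, a⟫ + b + ∫ y,
      (Real.exp (c * (⟪x, a⟫ + b) * (⟪y, a⟫ + b)) * (v * (⟪a, y⟫ + b)) /
        ∫ z, Real.exp (c * (⟪x, a⟫ + b) * (⟪z, a⟫ + b)) ∂μ) ∂μ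

/-- Component-wise (Hadamard) product `v₁ ⊙ ⋯ ⊙ v_T` of vectors in `ℝ^n`. -/
def hprod {n T : ℕ} (f : Fin T → E n) : E n := toE fun i => ∏ t, f t i

/-- Nested application `Φ(v_T, Φ(v_{T-1}, ⋯ Φ(v_1, 𝟏) ⋯ ))`. -/
def nestPhi {n : ℕ} (Φ : E n × E n → E n) : (T : ℕ) → (Fin T → E n) → E n
  | 0, _ => toE fun _ => 1
  | T + 1, v => Φ (v (Fin.last T), nestPhi Φ T fun t => v t.castSucc)

/-- Composition of a list of in-context maps; the head of the list acts first. -/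
def compList {m : ℕ} : List (ICMap m m) → ICMap m m
  | [] => fun _ x => x
  | l :: ls => ictxComp (compList ls) l

/-! ### Masked (space-time) framework -/

/-- Time marginal `μ̄ = P♯μ`, `P(x, t) = t`. -/
def timeMarg {m : ℕ} (μ : Measure (E m × ℝ)) : Measure ℝ := μ.map Prod.snd

/-- Squared 2-Wasserstein distance `W₂(α, β)²`, as an infimum over couplings. -/
def W2sq {m : ℕ} (α β : Measure (E m)) : ℝ≥0∞ :=
  sInf {c | ∃ π : Measure (E m × E m), π.map Prod.fst = α ∧ π.map Prod.snd = β ∧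
      c = ∫⁻ p, edist p.1 p.2 ^ 2 ∂π}

/-- `μ ∈ Lip_C^σ(Ω̃)`: a probability measure on `Ω̃ = Ω × [0,1]` admitting a
disintegration `μ(dx, ds) = μ(dx|s) μ̄(ds)` whose conditional `s ↦ μ(·|s)` is
`C`-Lipschitz for `W₂`, and with `μ̄({0}) ≥ σ`. -/
def IsLipCtx {m : ℕ} (Ω : Set (E m)) (C σ : ℝ) (μ : Measure (E m × ℝ)) : Prop :=
  IsProbabilityMeasure μ ∧ μ ((Ω ×ˢ Icc (0:ℝ) 1)ᶜ) = 0 ∧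
    ENNReal.ofReal σ ≤ timeMarg μ {0} ∧
    ∃ κ : ℝ → Measure (E m), Measurable κ ∧ (∀ s, IsProbabilityMeasure (κ s)) ∧
      (∀ s, κ s Ωᶜ = 0) ∧
      μ = (timeMarg μ).bind (fun s => (κ s).map fun x => (x, s)) ∧
      ∀ s ∈ Icc (0:ℝ) 1, ∀ t ∈ Icc (0:ℝ) 1,
        W2sq (κ s) (κ t) ≤ ENNReal.ofReal (C * |s - t|) ^ 2

/-- The masked measure `μ_t = (1_{[0,t]} / μ̄([0,t])) · μ` (restriction of the time
variable to `[0, t]`, renormalized). -/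
def maskedM {m : ℕ} (μ : Measure (E m × ℝ)) (t : ℝ) : Measure (E m × ℝ) :=
  (μ (univ ×ˢ Icc 0 t))⁻¹ • μ.restrict (univ ×ˢ Icc 0 t)

/-- The masked measure, as a probability measure (junk value `μ` itself when
`μ̄([0,t]) = 0`; for `μ ∈ Lip_C^σ` and `t ∈ [0,1]` one has `μ̄([0,t]) ≥ σ > 0`). -/
def maskedP {m : ℕ} (μ : ProbabilityMeasure (E m × ℝ)) (t : ℝ) :
    ProbabilityMeasure (E m × ℝ) :=
  if h : μ.toMeasure (univ ×ˢ Icc 0 t) = 0 then μ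
  else ⟨maskedM μ.toMeasure t, ⟨by
    simp only [maskedM, Measure.smul_apply, Measure.restrict_apply_univ, smul_eq_mul]
    exact ENNReal.inv_mul_cancel h (measure_ne_top _ _)⟩⟩

/-- Space-time in-context maps `(μ, (x, t)) ↦ Λ(μ, x, t)`. -/
abbrev STMap (m m' : ℕ) : Type := Measure (E m × ℝ) → E m × ℝ → E m'

/-- Masked in-context composition
`(Γ₂ ⋄ Γ₁)(μ, x, t) = Γ₂((Γ₁(μ), Id)♯μ, Γ₁(μ, x, t), t)`. -/
def stComp {m m' m'' : ℕ} (Γ₂ : STMap m' m'') (Γ₁ : STMap m m') : STMap m m'' :=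
  fun μ p => Γ₂ (μ.map fun q => (Γ₁ μ q, q.2)) (Γ₁ μ p, p.2)

/-- A context-free layer acting tokenwise in space, as a space-time map. -/
def stCtxFree {m m' : ℕ} (F : E m → E m') : STMap m m' := fun _ p => F p.1

/-- The masked multi-head self-attention in-context map `Γ_θ(μ, x, t)`. -/
def maskedAttention {m dh k H : ℕ} (θ : AttentionParams m dh k H)
    (μ : Measure (E m × ℝ)) (p : E m × ℝ) : E m :=
  p.1 + ∑ h : Fin H, θ.W h (∫ y,
      ((Real.exp (⟪θ.Q h p.1, θ.K h y.1⟫ / Real.sqrt k) *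
          (Icc (0:ℝ) p.2).indicator 1 y.2) /
        ∫ z, Real.exp (⟪θ.Q h p.1, θ.K h z.1⟫ / Real.sqrt k) *
          (Icc (0:ℝ) p.2).indicator 1 z.2 ∂μ) • θ.V h y.1 ∂μ)

/-- The unmasked attention formula on space-time measures (no time masking). -/
def attentionST {m dh k H : ℕ} (θ : AttentionParams m dh k H)
    (μ : Measure (E m × ℝ)) (x : E m) : E m :=
  x + ∑ h : Fin H, θ.W h (∫ y,
      (Real.exp (⟪θ.Q h x, θ.K h y.1⟫ / Real.sqrt k) /
        ∫ z, Real.exp (⟪θ.Q h x, θ.K h z.1⟫ / Real.sqrt k) ∂μ) • θ.V h y.1 ∂μ)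

/-- Causality of a space-time in-context map: `Λ(μ, x, t) = Λ(μ_t, x, t)`. -/
def IsCausalM {m d' : ℕ} (Ω : Set (E m)) (C σ : ℝ) (Λ : STMap m d') : Prop :=
  ∀ μ, IsLipCtx Ω C σ μ → ∀ x ∈ Ω, ∀ t ∈ Icc (0:ℝ) 1,
    Λ μ (x, t) = Λ (maskedM μ t) (x, t)

/-- Identifiability: `μ_t = μ_{t'}` implies `Λ(μ_t, ·, t) = Λ(μ_{t'}, ·, t')`. -/
def IsIdentifiableM {m d' : ℕ} (Ω : Set (E m)) (C σ : ℝ) (Λ : STMap m d') : Prop :=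
  ∀ μ, IsLipCtx Ω C σ μ → ∀ t ∈ Icc (0:ℝ) 1, ∀ t' ∈ Icc (0:ℝ) 1,
    maskedM μ t = maskedM μ t' →
    ∀ x ∈ Ω, Λ (maskedM μ t) (x, t) = Λ (maskedM μ t') (x, t')

/-- Space-time in-context maps taking a probability measure (carrying the weak*
topology) as context. -/
abbrev PSTMap (m d' : ℕ) : Type := ProbabilityMeasure (E m × ℝ) → E m × ℝ → E d'

/-- Causality, probability-measure version. -/
def IsCausalP {m d' : ℕ} (Ω : Set (E m)) (C σ : ℝ) (Λ : PSTMap m d') : Prop :=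
  ∀ μ : ProbabilityMeasure (E m × ℝ), IsLipCtx Ω C σ μ.toMeasure →
    ∀ x ∈ Ω, ∀ t ∈ Icc (0:ℝ) 1, Λ μ (x, t) = Λ (maskedP μ t) (x, t)

/-- Identifiability, probability-measure version. -/
def IsIdentifiableP {m d' : ℕ} (Ω : Set (E m)) (C σ : ℝ) (Λ : PSTMap m d') : Prop :=
  ∀ μ : ProbabilityMeasure (E m × ℝ), IsLipCtx Ω C σ μ.toMeasure →
    ∀ t ∈ Icc (0:ℝ) 1, ∀ t' ∈ Icc (0:ℝ) 1,
      maskedP μ t = maskedP μ t' →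
      ∀ x ∈ Ω, Λ (maskedP μ t) (x, t) = Λ (maskedP μ t') (x, t')

/-- `e(μ̄) = max supp(μ̄)`: the endpoint of the support of the time marginal. -/
def timeEnd {m : ℕ} (μ : Measure (E m × ℝ)) : ℝ :=
  sSup {r : ℝ | ∀ ε > 0, timeMarg μ (Ioo (r - ε) (r + ε)) ≠ 0}

/-- The reduced space `X_C^σ = {(μ_t, x) : μ ∈ Lip_C^σ(Ω̃), x ∈ Ω, t ∈ [0,1]}`. -/
def XCset {d : ℕ} (Ω : Set (E d)) (C σ : ℝ) :
    Set (ProbabilityMeasure (E d × ℝ) × E d) :=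
  {p | ∃ μ : ProbabilityMeasure (E d × ℝ), IsLipCtx Ω C σ μ.toMeasure ∧
      ∃ t ∈ Icc (0:ℝ) 1, ∃ x ∈ Ω, p = (maskedP μ t, x)}

/-- Deep masked transformers `F_{ξ_L} ⋄ Γ_{θ_L} ⋄ ⋯ ⋄ F_{ξ_1} ⋄ Γ_{θ_1}` with masked
attentions of token dimension `≤ dmax`, head and key dimensions `1`, and `≤ Hmax`
heads. -/
inductive IsMaskedChain (dmax Hmax : ℕ) : {m m' : ℕ} → STMap m m' → Prop
  | base {m m' H : ℕ} (hm : m ≤ dmax) (hH : H ≤ Hmax)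
      (θ : AttentionParams m 1 1 H) (F : E m → E m') :
      IsMaskedChain dmax Hmax (stComp (stCtxFree F) (maskedAttention θ))
  | step {m m' m'' H : ℕ} {T : STMap m m'} (hT : IsMaskedChain dmax Hmax T)
      (hm : m' ≤ dmax) (hH : H ≤ Hmax)
      (θ : AttentionParams m' 1 1 H) (F : E m' → E m'') :
      IsMaskedChain dmax Hmax (stComp (stCtxFree F) (stComp (maskedAttention θ) T))

/-- Reduced in-context maps `(ν, x) ↦ Λ̄(ν, x)`. -/
abbrev RMap (m m' : ℕ) : Type := Measure (E m × ℝ) → E m → E m'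

/-- Composition of reduced maps; the push-forward keeps the time fixed. -/
def rComp {m m' m'' : ℕ} (R₂ : RMap m' m'') (R₁ : RMap m m') : RMap m m'' :=
  fun ν x => R₂ (ν.map fun q => (R₁ ν q.1, q.2)) (R₁ ν x)

/-- Context-free tokenwise layer as a reduced map. -/
def rCtxFree {m m' : ℕ} (F : E m → E m') : RMap m m' := fun _ x => F x

/-- Reduced map `Γ̄_θ(ν, x) = Γ_θ(ν, x, e(ν̄))` of the masked attention. -/
def reducedAttention {m dh k H : ℕ} (θ : AttentionParams m dh k H) : RMap m m :=
  fun ν x => maskedAttention θ ν (x, timeEnd ν)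

/-- Deep transformers built from reduced masked attentions and context-free layers. -/
inductive IsReducedChain (dmax Hmax : ℕ) : {m m' : ℕ} → RMap m m' → Prop
  | base {m m' H : ℕ} (hm : m ≤ dmax) (hH : H ≤ Hmax)
      (θ : AttentionParams m 1 1 H) (F : E m → E m') :
      IsReducedChain dmax Hmax (rComp (rCtxFree F) (reducedAttention θ))
  | step {m m' m'' H : ℕ} {T : RMap m m'} (hT : IsReducedChain dmax Hmax T)
      (hm : m' ≤ dmax) (hH : H ≤ Hmax)
      (θ : AttentionParams m' 1 1 H) (F : E m' → E m'') :
      IsReducedChain dmax Hmax (rComp (rCtxFree F) (rComp (reducedAttention θ) T))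

end

/-!
The time mask `1_{[0,t]}` turns the masked attention against `μ` into the unmasked formula
against the restriction of `μ` to times `≤ t`, and the unmasked formula is invariant under
rescaling the measure, so it only sees `μ_t`. Since `μ_t` is carried by times
`≤ e(μ̄_t) = max supp μ̄_t`, masking `μ_t` at that endpoint changes nothing: both sides of (b)
equal the unmasked formula at `μ_t`.

For continuity, every measure of `X_C^σ` lives on the compact set `Ω × [0,1]`. Multiplying the
integrands by a compactly supported cutoff equal to `1` there does not change the formula and
makes the integrands bounded continuous functions depending continuously on `x` in the sup norm;
weak convergence then gives joint continuity in `(ν, x)`, and the softmax denominators stay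
positive.
-/

section Masking

variable {m dh k H : ℕ} (θ : AttentionParams m dh k H)

lemma mul_indicator_snd_eq_indicator {α β : Type*} (s : Set β) (g : α × β → ℝ) (y : α × β) :
    g y * s.indicator 1 y.2 = (univ ×ˢ s).indicator g y := by
  by_cases hy : y.2 ∈ s <;> simp [hy]

lemma integral_masked_weight_smul {α F : Type*} [MeasurableSpace α] [NormedAddCommGroup F]
    [NormedSpace ℝ F] (μ : Measure (α × ℝ)) (a : α × ℝ → ℝ) (v : α × ℝ → F) (t : ℝ) :
    ∫ y, ((a y * (Icc 0 t).indicator 1 y.2) /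
        ∫ z, a z * (Icc 0 t).indicator 1 z.2 ∂μ) • v y ∂μ
      = ∫ y, (a y / ∫ z, a z ∂μ.restrict (univ ×ˢ Icc 0 t)) • v y
          ∂μ.restrict (univ ×ˢ Icc 0 t) := by
  have hS : MeasurableSet ((univ : Set α) ×ˢ Icc (0:ℝ) t) :=
    MeasurableSet.univ.prod measurableSet_Icc
  simp_rw [mul_indicator_snd_eq_indicator, integral_indicator hS, ← integral_indicator hS]
  congr 1 with y
  by_cases hy : y ∈ (univ : Set α) ×ˢ Icc (0:ℝ) t <;> simp [hy]

theorem maskedAttention_eq_attentionST_restrict (μ : Measure (E m × ℝ)) (x : E m) (t : ℝ) :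
    maskedAttention θ μ (x, t) = attentionST θ (μ.restrict (univ ×ˢ Icc 0 t)) x := by
  simp only [maskedAttention, attentionST]
  congr 1
  refine Finset.sum_congr rfl fun h _ => congrArg _ ?_
  exact integral_masked_weight_smul μ _ _ t

theorem attentionST_smul_measure (μ : Measure (E m × ℝ)) {c : ℝ≥0∞} (hc₀ : c ≠ 0) (hc : c ≠ ∞)
    (x : E m) : attentionST θ (c • μ) x = attentionST θ μ x := by
  have hr : c.toReal ≠ 0 := ENNReal.toReal_ne_zero.mpr ⟨hc₀, hc⟩
  simp only [attentionST, integral_smul_measure, smul_eq_mul]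
  congr! 4 with h
  have : ∀ a D : ℝ, a / (c.toReal * D) = c.toReal⁻¹ * (a / D) := fun a D => by ring
  simp only [this, mul_smul, integral_smul, smul_inv_smul₀ hr]

theorem maskedAttention_eq_attentionST_maskedM (μ : Measure (E m × ℝ)) [IsFiniteMeasure μ]
    (x : E m) (t : ℝ) : maskedAttention θ μ (x, t) = attentionST θ (maskedM μ t) x := by
  rw [maskedAttention_eq_attentionST_restrict, maskedM]
  by_cases h : μ (univ ×ˢ Icc 0 t) = 0
  · rw [Measure.restrict_eq_zero.mpr h, smul_zero]
  · exact (attentionST_smul_measure θ _ (ENNReal.inv_ne_zero.mpr (measure_ne_top _ _))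
      (ENNReal.inv_ne_top.mpr h) x).symm

theorem maskedAttention_eq_attentionST_of_ae {ν : Measure (E m × ℝ)} {s : ℝ}
    (hν : ∀ᵐ y ∂ν, y.2 ∈ Icc 0 s) (x : E m) :
    maskedAttention θ ν (x, s) = attentionST θ ν x := by
  rw [maskedAttention_eq_attentionST_restrict, Measure.restrict_eq_self_of_ae_mem]
  simpa only [mem_prod, mem_univ, true_and] using hν

end Masking

section TimeEnd

variable {m : ℕ}

theorem timeEnd_eq_sSup_support (ν : Measure (E m × ℝ)) :
    timeEnd ν = sSup (timeMarg ν).support := by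
  unfold timeEnd
  congr 1 with r
  rw [(nhds_basis_Ioo_pos r).mem_measureSupport]
  simp only [mem_ofPred_eq, pos_iff_ne_zero]

theorem ae_snd_le_timeEnd {ν : Measure (E m × ℝ)} {t : ℝ} (h : ∀ᵐ y ∂ν, y.2 ≤ t) :
    ∀ᵐ y ∂ν, y.2 ≤ timeEnd ν := by
  have hmarg : ∀ᵐ s ∂timeMarg ν, s ≤ t :=
    (ae_map_iff measurable_snd.aemeasurable measurableSet_Iic).mpr h
  have hbdd : BddAbove (timeMarg ν).support :=
    ⟨t, Measure.support_subset_of_isClosed isClosed_Iic hmarg⟩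
  rw [timeEnd_eq_sSup_support]
  have hsupp : ∀ᵐ s ∂timeMarg ν, s ≤ sSup (timeMarg ν).support :=
    Filter.Eventually.mono (timeMarg ν).support_mem_ae fun s hs => le_csSup hbdd hs
  exact ae_of_ae_map measurable_snd.aemeasurable hsupp

theorem ae_snd_mem_Icc_maskedM (μ : Measure (E m × ℝ)) (t : ℝ) :
    ∀ᵐ y ∂maskedM μ t, y.2 ∈ Icc 0 t :=
  Measure.ae_smul_measure ((ae_restrict_mem (MeasurableSet.univ.prod measurableSet_Icc)).mono
    fun _ hy => hy.2) _

theorem maskedM_absolutelyContinuous (μ : Measure (E m × ℝ)) (t : ℝ) : maskedM μ t ≪ μ :=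
  Measure.smul_absolutelyContinuous.trans
    (Measure.absolutelyContinuous_of_le Measure.restrict_le_self)

theorem maskedAttention_maskedM_timeEnd {dh k H : ℕ} (θ : AttentionParams m dh k H)
    (μ : Measure (E m × ℝ)) (t : ℝ) (x : E m) :
    maskedAttention θ (maskedM μ t) (x, timeEnd (maskedM μ t))
      = attentionST θ (maskedM μ t) x := by
  have hmask := ae_snd_mem_Icc_maskedM μ t
  refine maskedAttention_eq_attentionST_of_ae θ ?_ x
  filter_upwards [hmask, ae_snd_le_timeEnd (hmask.mono fun _ hy => hy.2)] with y hy hle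
  exact ⟨hy.1, hle⟩

end TimeEnd

section LipContexts

variable {m : ℕ} {Ω : Set (E m)} {C σ : ℝ}

theorem IsLipCtx.measure_univ_prod_Icc_ne_zero {μ : Measure (E m × ℝ)}
    (hμ : IsLipCtx Ω C σ μ) (hσ : 0 < σ) {t : ℝ} (ht : 0 ≤ t) :
    μ (univ ×ˢ Icc 0 t) ≠ 0 := by
  obtain ⟨-, -, hmass, -⟩ := hμ
  have hzero : timeMarg μ {0} ≤ μ (univ ×ˢ Icc 0 t) := by
    rw [timeMarg, Measure.map_apply measurable_snd (measurableSet_singleton 0)]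
    exact measure_mono fun y hy => ⟨mem_univ _, by simp_all⟩
  exact ((ENNReal.ofReal_pos.mpr hσ).trans_le (hmass.trans hzero)).ne'

theorem maskedP_toMeasure {μ : ProbabilityMeasure (E m × ℝ)} {t : ℝ}
    (h : μ.toMeasure (univ ×ˢ Icc 0 t) ≠ 0) : (maskedP μ t).toMeasure = maskedM μ t := by
  simp only [maskedP, h, ↓reduceDIte]
  rfl

end LipContexts

section WeakContinuity

open scoped BoundedContinuousFunction

variable {X Y F : Type*} [TopologicalSpace X] [TopologicalSpace Y] [NormedAddCommGroup F]

theorem exists_continuous_bcf_of_vanishing_outside {f : X → Y → F}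
    (hf : Continuous (Function.uncurry f)) {K : Set Y} (hK : IsCompact K)
    (hfK : ∀ x, ∀ y ∉ K, f x y = 0) :
    ∃ G : X → Y →ᵇ F, Continuous G ∧ ∀ x, ⇑(G x) = f x := by
  have hcont : ∀ x, Continuous (f x) := fun x => hf.comp (Continuous.prodMk_right x)
  have hbound : ∀ x, ∃ C, ∀ y, ‖f x y‖ ≤ C := fun x => by
    obtain ⟨C, hC⟩ := hK.exists_bound_of_continuousOn (hcont x).continuousOn
    refine ⟨max C 0, fun y => ?_⟩
    by_cases hy : y ∈ K
    · exact le_max_of_le_left (hC y hy)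
    · simp [hfK x y hy]
  refine ⟨fun x => .ofNormedAddCommGroup (f x) (hcont x) _ (hbound x).choose_spec, ?_,
    fun x => rfl⟩
  refine continuous_iff_continuousAt.mpr fun x₀ => Metric.tendsto_nhds.mpr fun ε hε => ?_
  obtain ⟨v, hv, hvK⟩ := hK.mem_uniformity_of_prod (s := univ) (q := x₀)
    hf.continuousOn (mem_univ _) (Metric.dist_mem_uniformity (half_pos hε))
  refine Filter.mem_of_superset (nhdsWithin_univ x₀ ▸ hv) fun x hx => ?_
  refine lt_of_le_of_lt ((BoundedContinuousFunction.dist_le (half_pos hε).le).mpr fun y => ?_)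
    (half_lt_self hε)
  by_cases hy : y ∈ K
  · exact (hvK x hx y hy).le
  · simp [hfK x y hy, hfK x₀ y hy, (half_pos hε).le]

variable [MeasurableSpace Y] [OpensMeasurableSpace Y] [NormedSpace ℝ F] [FiniteDimensional ℝ F]
  [MeasurableSpace F] [BorelSpace F]

theorem MeasureTheory.ProbabilityMeasure.tendsto_integral_of_tendsto {γ : Type*} {l : Filter γ}
    {μs : γ → ProbabilityMeasure Y} {μ : ProbabilityMeasure Y} (h : Tendsto μs l (𝓝 μ))
    (g : Y →ᵇ F) :
    Tendsto (fun i => ∫ y, g y ∂(μs i : Measure Y)) l (𝓝 (∫ y, g y ∂(μ : Measure Y))) := by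
  let b := Module.finBasis ℝ F
  let L : Fin (Module.finrank ℝ F) → F →L[ℝ] ℝ := fun i =>
    LinearMap.toContinuousLinearMap (b.coord i)
  have hexpand : ∀ ν : ProbabilityMeasure Y,
      ∫ y, g y ∂(ν : Measure Y) = ∑ i, (∫ y, L i (g y) ∂(ν : Measure Y)) • b i := by
    intro ν
    conv_lhs => rw [← b.sum_repr (∫ y, g y ∂(ν : Measure Y))]
    congr! 2 with i
    exact ((L i).integral_comp_comm (g.integrable _)).symm
  simp only [hexpand]
  refine tendsto_finsetSum _ fun i _ => Tendsto.smul_const ?_ _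
  exact ProbabilityMeasure.tendsto_iff_forall_integral_tendsto.mp h
    ((L i).compLeftContinuousBounded Y g)

theorem continuous_integral_of_continuous_bcf {G : X → Y →ᵇ F} (hG : Continuous G) :
    Continuous fun p : ProbabilityMeasure Y × X => ∫ y, G p.2 y ∂(p.1 : Measure Y) := by
  refine continuous_iff_continuousAt.mpr fun q => ?_
  have hsplit : ∀ p : ProbabilityMeasure Y × X, ∫ y, G p.2 y ∂(p.1 : Measure Y)
      = ∫ y, (G p.2 - G q.2) y ∂(p.1 : Measure Y) + ∫ y, G q.2 y ∂(p.1 : Measure Y) := by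
    intro p
    rw [BoundedContinuousFunction.coe_sub, Pi.sub_def,
      integral_sub ((G p.2).integrable _) ((G q.2).integrable _), sub_add_cancel]
  have hsmall : Tendsto (fun p : ProbabilityMeasure Y × X =>
      ∫ y, (G p.2 - G q.2) y ∂(p.1 : Measure Y)) (𝓝 q) (𝓝 0) := by
    refine squeeze_zero_norm (fun p => BoundedContinuousFunction.norm_integral_le_norm _ _) ?_
    exact tendsto_iff_norm_sub_tendsto_zero.mp ((hG.tendsto q.2).comp continuous_snd.continuousAt)
  have hweak := ProbabilityMeasure.tendsto_integral_of_tendsto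
    (continuous_fst.tendsto q) (G q.2)
  have hlim := (hsmall.add hweak).congr fun p => (hsplit p).symm
  rwa [zero_add] at hlim

theorem continuous_integral_of_vanishing_outside {f : X → Y → F}
    (hf : Continuous (Function.uncurry f)) {K : Set Y} (hK : IsCompact K)
    (hfK : ∀ x, ∀ y ∉ K, f x y = 0) :
    Continuous fun p : ProbabilityMeasure Y × X => ∫ y, f p.2 y ∂(p.1 : Measure Y) := by
  obtain ⟨G, hG, hGf⟩ := exists_continuous_bcf_of_vanishing_outside hf hK hfK
  simpa only [hGf] using continuous_integral_of_continuous_bcf hG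

end WeakContinuity

section AttentionContinuity

variable {m dh k H : ℕ} (θ : AttentionParams m dh k H)

theorem attentionST_eq_of_ae_eq_one {ν : Measure (E m × ℝ)} {χ : E m × ℝ → ℝ}
    (hχ : ∀ᵐ y ∂ν, χ y = 1) (x : E m) :
    attentionST θ ν x = x + ∑ h : Fin H, θ.W h
      ((∫ y, Real.exp (⟪θ.Q h x, θ.K h y.1⟫ / Real.sqrt k) * χ y ∂ν)⁻¹ •
        ∫ y, (Real.exp (⟪θ.Q h x, θ.K h y.1⟫ / Real.sqrt k) * χ y) • θ.V h y.1 ∂ν) := by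
  have hcut : ∀ a : E m × ℝ → ℝ, (fun y => a y * χ y) =ᵐ[ν] a := fun a =>
    hχ.mono fun y hy => by simp only [hy, mul_one]
  simp only [attentionST]
  congr! 3 with h
  rw [integral_congr_ae (hcut _), ← integral_smul]
  refine integral_congr_ae (hχ.mono fun y hy => ?_)
  simp only [hy, mul_one, div_eq_inv_mul, mul_smul]

theorem continuousOn_attentionST {K : Set (E m × ℝ)} (hK : IsCompact K) :
    ContinuousOn (fun p : ProbabilityMeasure (E m × ℝ) × E m => attentionST θ p.1 p.2)
      {p | (p.1 : Measure (E m × ℝ)) Kᶜ = 0} := by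
  obtain ⟨χ, hχK, -, hχc, -⟩ :=
    exists_continuous_one_zero_of_isCompact hK isClosed_empty (disjoint_empty K)
  set w : Fin H → E m → E m × ℝ → ℝ :=
    fun h x y => Real.exp (⟪θ.Q h x, θ.K h y.1⟫ / Real.sqrt k) * χ y with hw_def
  have hw : ∀ h, Continuous (Function.uncurry (w h)) := fun h => by
    simp only [hw_def]; fun_prop
  have hwχ : ∀ h x, ∀ y ∉ tsupport χ, w h x y = 0 := fun h x y hy => by
    simp [hw_def, image_eq_zero_of_notMem_tsupport hy]
  have hden : ∀ h, Continuous fun p : ProbabilityMeasure (E m × ℝ) × E m =>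
      ∫ y, w h p.2 y ∂(p.1 : Measure (E m × ℝ)) := fun h =>
    continuous_integral_of_vanishing_outside (hw h) hχc (hwχ h)
  have hnum : ∀ h, Continuous fun p : ProbabilityMeasure (E m × ℝ) × E m =>
      ∫ y, w h p.2 y • θ.V h y.1 ∂(p.1 : Measure (E m × ℝ)) := fun h =>
    continuous_integral_of_vanishing_outside (f := fun x y => w h x y • θ.V h y.1)
      (by simp only [hw_def]; fun_prop) hχc fun x y hy => by simp [hwχ h x y hy]
  have hχae : ∀ p : ProbabilityMeasure (E m × ℝ) × E m, (p.1 : Measure (E m × ℝ)) Kᶜ = 0 →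
      ∀ᵐ y ∂(p.1 : Measure (E m × ℝ)), χ y = 1 := fun p hp =>
    (measure_eq_zero_iff_ae_notMem.mp hp).mono fun y hy => hχK (not_not.mp hy)
  have hpos : ∀ p : ProbabilityMeasure (E m × ℝ) × E m, (p.1 : Measure (E m × ℝ)) Kᶜ = 0 →
      ∀ h, ∫ y, w h p.2 y ∂(p.1 : Measure (E m × ℝ)) ≠ 0 := fun p hp h => by
    have hint : Integrable (w h p.2) (p.1 : Measure (E m × ℝ)) :=
      ((hw h).comp (Continuous.prodMk_right p.2)).integrable_of_hasCompactSupport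
        (HasCompactSupport.intro hχc (hwχ h p.2))
    have hexp : w h p.2 =ᵐ[(p.1 : Measure (E m × ℝ))]
        fun y => Real.exp (⟪θ.Q h p.2, θ.K h y.1⟫ / Real.sqrt k) :=
      (hχae p hp).mono fun y hy => by simp only [hw_def, hy, mul_one]
    rw [integral_congr_ae hexp]
    exact (integral_exp_pos (hint.congr hexp)).ne'
  refine ContinuousOn.congr ?_ fun p hp => attentionST_eq_of_ae_eq_one θ (hχae p hp) p.2
  refine continuous_snd.continuousOn.add (continuousOn_finsetSum _ fun h _ => ?_)
  exact (θ.W h).continuous.comp_continuousOn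
    (((hden h).continuousOn.inv₀ fun p hp => hpos p hp h).smul (hnum h).continuousOn)

end AttentionContinuity

theorem masked_attention_reduced_general {d dh k H : ℕ} (Ω : Set (E d)) (hΩ : IsCompact Ω)
    {C σ : ℝ} (hσ : σ ∈ Ioo (0:ℝ) 1)
    (θ : AttentionParams d dh k H) :
    (∀ μ : ProbabilityMeasure (E d × ℝ), IsLipCtx Ω C σ μ.toMeasure →
        ∀ x ∈ Ω, ∀ t ∈ Icc (0:ℝ) 1,
          maskedAttention θ μ.toMeasure (x, t)
            = maskedAttention θ (maskedP μ t).toMeasure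
                (x, timeEnd (maskedP μ t).toMeasure)) ∧
      ContinuousOn (fun p : ProbabilityMeasure (E d × ℝ) × E d =>
          maskedAttention θ p.1.toMeasure (p.2, timeEnd p.1.toMeasure))
        (XCset Ω C σ) ∧
      (∀ μ : ProbabilityMeasure (E d × ℝ), IsLipCtx Ω C σ μ.toMeasure →
        ∀ x ∈ Ω, ∀ t ∈ Icc (0:ℝ) 1,
          maskedAttention θ (maskedP μ t).toMeasure
              (x, timeEnd (maskedP μ t).toMeasure)
            = attentionST θ (maskedP μ t).toMeasure x) := by
  have hmasked : ∀ μ : ProbabilityMeasure (E d × ℝ), IsLipCtx Ω C σ μ.toMeasure →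
      ∀ t ∈ Icc (0:ℝ) 1, (maskedP μ t).toMeasure = maskedM μ t := fun μ hμ t ht =>
    maskedP_toMeasure (hμ.measure_univ_prod_Icc_ne_zero hσ.1 ht.1)
  have hreduced : ∀ μ : ProbabilityMeasure (E d × ℝ), IsLipCtx Ω C σ μ.toMeasure →
      ∀ x, ∀ t ∈ Icc (0:ℝ) 1, maskedAttention θ (maskedP μ t).toMeasure
        (x, timeEnd (maskedP μ t).toMeasure) = attentionST θ (maskedP μ t).toMeasure x := by
    intro μ hμ x t ht
    rw [hmasked μ hμ t ht]
    exact maskedAttention_maskedM_timeEnd θ μ t x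
  refine ⟨fun μ hμ x _ t ht => ?_, ?_, fun μ hμ x _ t ht => hreduced μ hμ x t ht⟩
  · rw [hreduced μ hμ x t ht, hmasked μ hμ t ht]
    exact maskedAttention_eq_attentionST_maskedM θ μ x t
  · have hK : IsCompact (Ω ×ˢ Icc (0:ℝ) 1) := hΩ.prod isCompact_Icc
    refine ((continuousOn_attentionST θ hK).mono ?_).congr ?_
    · rintro _ ⟨μ, hμ, t, ht, x, -, rfl⟩
      rw [mem_ofPred_eq, hmasked μ hμ t ht]
      exact maskedM_absolutelyContinuous μ.toMeasure t hμ.2.1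
    · rintro _ ⟨μ, hμ, t, ht, x, -, rfl⟩
      exact hreduced μ hμ x t ht

/-- **Reduced masked attention (Lemma 12 (b), (c)).** For a masked multi-head
self-attention `Γ_θ`: (b) `Γ_θ(μ, x, t) = Γ̄_θ(μ_t, x)` on `Lip_C^σ(Ω̃) × Ω̃` where
`Γ̄_θ(ν, x) = Γ_θ(ν, x, e(ν̄))`; (c) the reduced map `(ν, x) ↦ Γ̄_θ(ν, x)` is continuous
on `X_C^σ` for the product of the weak* and Euclidean topologies; moreover `Γ̄_θ(μ_t, x)`
equals the unmasked attention formula evaluated at `μ_t`. -/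
theorem masked_attention_reduced {d dh k H : ℕ} (Ω : Set (E d)) (hΩ : IsCompact Ω)
    {C σ : ℝ} (hC : 0 < C) (hσ : σ ∈ Ioo (0:ℝ) 1)
    (θ : AttentionParams d dh k H) :
    (∀ μ : ProbabilityMeasure (E d × ℝ), IsLipCtx Ω C σ μ.toMeasure →
        ∀ x ∈ Ω, ∀ t ∈ Icc (0:ℝ) 1,
          maskedAttention θ μ.toMeasure (x, t)
            = maskedAttention θ (maskedP μ t).toMeasure
                (x, timeEnd (maskedP μ t).toMeasure)) ∧
      ContinuousOn (fun p : ProbabilityMeasure (E d × ℝ) × E d =>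
          maskedAttention θ p.1.toMeasure (p.2, timeEnd p.1.toMeasure))
        (XCset Ω C σ) ∧
      (∀ μ : ProbabilityMeasure (E d × ℝ), IsLipCtx Ω C σ μ.toMeasure →
        ∀ x ∈ Ω, ∀ t ∈ Icc (0:ℝ) 1,
          maskedAttention θ (maskedP μ t).toMeasure
              (x, timeEnd (maskedP μ t).toMeasure)
            = attentionST θ (maskedP μ t).toMeasure x) :=
  masked_attention_reduced_general Ω hΩ hσ θ
end

section
/- Let Ω ⊂ ℝ^d be compact, Ω̃ = Ω × [0,1], C > 0, σ ∈ (0,1). Let (Λ_n)_{n∈ℕ} be continuous, causal and identifiable space-time in-context maps with values in ℝ^{d'}, and let Λ* be a continuous, causal space-time in-context map with values in ℝ^{d'}. If sup over (μ, x, t) ∈ Lip_C^σ(Ω̃) × Ω̃ of |Λ_n(μ, x, t) − Λ*(μ, x, t)| tends to 0 as n → ∞, then Λ* is identifiable; that is, identifiability is stable under uniform convergence. -/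
open MeasureTheory Set Filter
open scoped ENNReal RealInnerProductSpace BigOperators Topology

theorem tendsto_atTop_of_forall_norm_sub_le {F : Type*} [SeminormedAddCommGroup F]
    {u : ℕ → F} {a : F} (h : ∀ ε > 0, ∃ N : ℕ, ∀ n ≥ N, ‖u n - a‖ ≤ ε) :
    Tendsto u atTop (𝓝 a) := by
  refine Metric.tendsto_atTop.2 fun ε hε => ?_
  obtain ⟨N, hN⟩ := h (ε / 2) (half_pos hε)
  exact ⟨N, fun n hn => by rw [dist_eq_norm]; linarith [hN n hn]⟩

theorem IsIdentifiableP.apply_eq_of_maskedP_eq {m d' : ℕ} {Ω : Set (E m)} {C σ : ℝ}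
    {Λ : PSTMap m d'} (hident : IsIdentifiableP Ω C σ Λ) (hcausal : IsCausalP Ω C σ Λ)
    {μ : ProbabilityMeasure (E m × ℝ)} (hμ : IsLipCtx Ω C σ μ.toMeasure)
    {t t' : ℝ} (ht : t ∈ Icc (0:ℝ) 1) (ht' : t' ∈ Icc (0:ℝ) 1)
    (hmask : maskedP μ t = maskedP μ t') {x : E m} (hx : x ∈ Ω) :
    Λ μ (x, t) = Λ μ (x, t') := by
  rw [hcausal μ hμ x hx t ht, hcausal μ hμ x hx t' ht', hident μ hμ t ht t' ht' hmask x hx]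

theorem identifiability_stable_general {d d' : ℕ} (Ω : Set (E d)) {C σ : ℝ}
    (Λn : ℕ → PSTMap d d') (Λ : PSTMap d d')
    (hcausaln : ∀ n, IsCausalP Ω C σ (Λn n))
    (hidentn : ∀ n, IsIdentifiableP Ω C σ (Λn n))
    (hcausal : IsCausalP Ω C σ Λ)
    (hconv : ∀ ε > 0, ∃ N₀ : ℕ, ∀ n ≥ N₀,
      ∀ μ : ProbabilityMeasure (E d × ℝ), IsLipCtx Ω C σ μ.toMeasure →
        ∀ x ∈ Ω, ∀ t ∈ Icc (0:ℝ) 1, ‖Λn n μ (x, t) - Λ μ (x, t)‖ ≤ ε) :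
    IsIdentifiableP Ω C σ Λ := by
  intro μ hμ t ht t' ht' hmask x hx
  rw [← hcausal μ hμ x hx t ht, ← hcausal μ hμ x hx t' ht']
  have hlim : ∀ s ∈ Icc (0:ℝ) 1, Tendsto (fun n => Λn n μ (x, s)) atTop (𝓝 (Λ μ (x, s))) :=
    fun s hs => tendsto_atTop_of_forall_norm_sub_le fun ε hε =>
      (hconv ε hε).imp fun N hN n hn => hN n hn μ hμ x hx s hs
  have hseq : (fun n => Λn n μ (x, t)) = fun n => Λn n μ (x, t') :=
    funext fun n => (hidentn n).apply_eq_of_maskedP_eq (hcausaln n) hμ ht ht' hmask hx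
  exact tendsto_nhds_unique (hseq ▸ hlim t ht) (hlim t' ht')

/-- **Stability of identifiability under uniform convergence (Lemma 14).** If continuous,
causal, identifiable space-time in-context maps `Λₙ` converge uniformly on
`Lip_C^σ(Ω̃) × Ω̃` to a continuous causal space-time in-context map `Λ*`, then `Λ*` is
identifiable. -/
theorem identifiability_stable {d d' : ℕ} (Ω : Set (E d)) (hΩ : IsCompact Ω)
    {C σ : ℝ} (hC : 0 < C) (hσ : σ ∈ Ioo (0:ℝ) 1)
    (Λn : ℕ → PSTMap d d') (Λ : PSTMap d d')
    (hcontn : ∀ n, ContinuousOn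
      (fun p : ProbabilityMeasure (E d × ℝ) × (E d × ℝ) => Λn n p.1 p.2)
      ({μ : ProbabilityMeasure (E d × ℝ) | IsLipCtx Ω C σ μ.toMeasure} ×ˢ
        (Ω ×ˢ Icc (0:ℝ) 1)))
    (hcausaln : ∀ n, IsCausalP Ω C σ (Λn n))
    (hidentn : ∀ n, IsIdentifiableP Ω C σ (Λn n))
    (hcont : ContinuousOn (fun p : ProbabilityMeasure (E d × ℝ) × (E d × ℝ) => Λ p.1 p.2)
      ({μ : ProbabilityMeasure (E d × ℝ) | IsLipCtx Ω C σ μ.toMeasure} ×ˢ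
        (Ω ×ˢ Icc (0:ℝ) 1)))
    (hcausal : IsCausalP Ω C σ Λ)
    (hconv : ∀ ε > 0, ∃ N₀ : ℕ, ∀ n ≥ N₀,
      ∀ μ : ProbabilityMeasure (E d × ℝ), IsLipCtx Ω C σ μ.toMeasure →
        ∀ x ∈ Ω, ∀ t ∈ Icc (0:ℝ) 1, ‖Λn n μ (x, t) - Λ μ (x, t)‖ ≤ ε) :
    IsIdentifiableP Ω C σ Λ :=
  identifiability_stable_general Ω Λn Λ hcausaln hidentn hcausal hconv
end
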